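/- arXiv:2402.13248 — 2 statements merged into one kernel-verified Lean document; each statement's English description precedes it below -/
import Mathlib

section
/- Let A(t) = a_0 + ... + a_d t^d with all a_k >= 0, R(t) = t^d A(1/t), B(t) = R(t+1), and define gamma_r(B) by r*gamma_r = [u^{r-1}] J'(u)(1+u)^{2r} with J(u) = B(u)/(1+u)^d. If r is odd, then gamma_r(B) <= 0. -/
/-!
Writing `R(t) = ∑ aₖ t^{d-k}`, the series `J(u) = B(u)/(1+u)^d` is `∑ aₖ (1+u)^{-k}`, so
`J'(u)(1+u)^{2r} = -∑ k aₖ (1+u)^{2r-k-1}` and `r γᵣ = -∑ k aₖ binom(2r-k-1, r-1)` with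
generalized binomial coefficients. For negative `m` one has
`binom(m, n) = (-1)ⁿ binom(n-m-1, n)`, so `binom(m, n) ≥ 0` for every integer `m` as soon as `n`
is even; for odd `r` this applies to `n = r - 1`.
-/

open PowerSeries Finset

theorem Ring.choose_int_nonneg_of_even (m : ℤ) {n : ℕ} (hn : Even n) :
    0 ≤ Ring.choose m n := by
  rcases m with k | k
  · rw [Int.ofNat_eq_natCast, Ring.choose_natCast]
    positivity
  · rw [Int.negSucc_eq, Ring.choose_neg, Int.negOnePow_even n (by exact_mod_cast hn), one_smul,
      show (k : ℤ) + 1 + n - 1 = ((k + n : ℕ) : ℤ) by push_cast; ring, Ring.choose_natCast]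
    positivity

theorem Polynomial.reflect_sum {R ι : Type*} [Semiring R] (N : ℕ) (s : Finset ι)
    (f : ι → Polynomial R) : reflect N (∑ i ∈ s, f i) = ∑ i ∈ s, reflect N (f i) :=
  map_sum (⟨⟨reflect N, reflect_zero⟩, fun f g ↦ reflect_add f g N⟩ : Polynomial R →+ _)
    f s

namespace PowerSeries

theorem derivative_binomialSeries {R A : Type*} [CommRing R] [BinomialRing R] [CommRing A]
    [Algebra R A] (r : R) :
    d⁄dX A (binomialSeries A r) = r • binomialSeries A (r - 1) := by
  ext n
  have h := Ring.choose_smul_choose r (Nat.le_add_left 1 n)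
  rw [Nat.choose_one_right, Ring.choose_one_right, Nat.add_sub_cancel, Nat.cast_one] at h
  rw [coeff_derivative, coeff_smul, binomialSeries_coeff, binomialSeries_coeff, ← smul_assoc,
    smul_eq_mul r, ← h, smul_assoc, smul_mul_assoc, one_mul, ← Nat.cast_succ, ← nsmul_one,
    smul_comm]

theorem inv_one_add_X_pow_eq_binomialSeries {K : Type*} [Field K] (d : ℕ) :
    ((1 + X : K⟦X⟧) ^ d)⁻¹ = binomialSeries K (-d : ℤ) := by
  rw [PowerSeries.inv_eq_iff_mul_eq_one (by simp), ← binomialSeries_nat (R := ℤ),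
    ← binomialSeries_add, neg_add_cancel, binomialSeries_zero]

theorem coe_reflect_comp_X_add_one {R : Type*} [CommSemiring R] {p : Polynomial R} {d : ℕ}
    (hp : p.natDegree ≤ d) :
    (((Polynomial.reflect d p).comp (Polynomial.X + 1) : Polynomial R) : R⟦X⟧) =
      ∑ k ∈ range (d + 1), C (p.coeff k) * (1 + X) ^ (d - k) := by
  conv_lhs => rw [p.as_sum_range_C_mul_X_pow' (Nat.lt_succ_of_le hp)]
  rw [Polynomial.reflect_sum, Polynomial.sum_comp, ← Polynomial.coeToPowerSeries.ringHom_apply,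
    map_sum]
  refine sum_congr rfl fun k hk => ?_
  rw [Polynomial.reflect_C_mul_X_pow, Polynomial.revAt_le (Nat.lt_succ_iff.mp (mem_range.mp hk))]
  simp [add_comm]

theorem coe_reflect_comp_X_add_one_mul_inv {K : Type*} [Field K] {p : Polynomial K} {d : ℕ}
    (hp : p.natDegree ≤ d) :
    (((Polynomial.reflect d p).comp (Polynomial.X + 1) : Polynomial K) : K⟦X⟧) *
        ((1 + X) ^ d)⁻¹ =
      ∑ k ∈ range (d + 1), C (p.coeff k) * binomialSeries K (-k : ℤ) := by
  rw [coe_reflect_comp_X_add_one hp, inv_one_add_X_pow_eq_binomialSeries, sum_mul]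
  refine sum_congr rfl fun k hk => ?_
  rw [mul_assoc, ← binomialSeries_nat (R := ℤ), ← binomialSeries_add,
    Nat.cast_sub (Nat.lt_succ_iff.mp (mem_range.mp hk)), show (d : ℤ) - k + -d = -k by ring]

theorem coeff_derivative_sum_mul_one_add_X_pow {A : Type*} [CommRing A] (s : Finset ℕ)
    (c : ℕ → A) (m n : ℕ) :
    coeff n (d⁄dX A (∑ k ∈ s, C (c k) * binomialSeries A (-k : ℤ)) * (1 + X) ^ m) =
      -∑ k ∈ s, k * c k * Ring.choose ((m : ℤ) - k - 1) n := by
  simp only [← smul_eq_C_mul, map_sum, sum_mul, ← sum_neg_distrib]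
  refine sum_congr rfl fun k _ => ?_
  rw [(d⁄dX A).map_smul, derivative_binomialSeries, smul_mul_assoc, smul_mul_assoc,
    ← binomialSeries_nat (R := ℤ), ← binomialSeries_add, coeff_smul, coeff_smul,
    binomialSeries_coeff, show -(k : ℤ) - 1 + m = m - k - 1 by ring]
  simp only [zsmul_eq_mul, smul_eq_mul, mul_one, Int.cast_neg, Int.cast_natCast]
  ring

end PowerSeries

theorem gamma_odd_nonpos_of_shifted_reciprocal_general
    (d r : ℕ) (hodd : Odd r)
    (A : Polynomial ℝ) (hA : A.natDegree ≤ d) (hpos : ∀ k, 0 ≤ A.coeff k)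
    (γ : ℝ)
    (hγ : (r : ℝ) * γ =
      PowerSeries.coeff (R := ℝ) (r - 1)
        (PowerSeries.derivativeFun
            ((((Polynomial.reflect d A).comp (Polynomial.X + 1) : Polynomial ℝ) : PowerSeries ℝ) *
              (((1 + PowerSeries.X) ^ d)⁻¹ : PowerSeries ℝ)) *
          (1 + PowerSeries.X) ^ (2 * r))) :
    γ ≤ 0 := by
  have hformula : (r : ℝ) * γ = -∑ k ∈ range (d + 1),
      k * A.coeff k * Ring.choose ((2 * r : ℕ) - k - 1 : ℤ) (r - 1) := by
    rw [hγ, ← coeff_derivative_sum_mul_one_add_X_pow, ← coe_reflect_comp_X_add_one_mul_inv hA]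
    rfl
  have hsum : 0 ≤ ∑ k ∈ range (d + 1),
      k * A.coeff k * ((Ring.choose ((2 * r : ℕ) - k - 1 : ℤ) (r - 1) : ℤ) : ℝ) :=
    sum_nonneg fun k _ => mul_nonneg (mul_nonneg k.cast_nonneg (hpos k))
      (Int.cast_nonneg_iff.mpr (Ring.choose_int_nonneg_of_even _ (Nat.Odd.sub_odd hodd odd_one)))
  exact nonpos_of_mul_nonpos_right (hformula.trans_le (neg_nonpos.mpr hsum))
    (Nat.cast_pos.mpr hodd.pos)

/-- Let `A(t) = ∑ aₖ tᵏ` with nonnegative coefficients, `R(t) = t^d A(1/t)`, `B(t) = R(t+1)`,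
and define `γᵣ(B)` by `r·γᵣ = [u^{r-1}] J'(u)(1+u)^{2r}` with `J(u) = B(u)/(1+u)^d`.
If `r` is odd then `γᵣ(B) ≤ 0`. -/
theorem gamma_odd_nonpos_of_shifted_reciprocal
    (d r : ℕ) (hr : 1 ≤ r) (hrd : 2 * r ≤ d) (hodd : Odd r)
    (A : Polynomial ℝ) (hA : A.natDegree ≤ d) (hpos : ∀ k, 0 ≤ A.coeff k)
    (γ : ℝ)
    (hγ : (r : ℝ) * γ =
      PowerSeries.coeff (R := ℝ) (r - 1)
        (PowerSeries.derivativeFun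
            ((((Polynomial.reflect d A).comp (Polynomial.X + 1) : Polynomial ℝ) : PowerSeries ℝ) *
              (((1 + PowerSeries.X) ^ d)⁻¹ : PowerSeries ℝ)) *
          (1 + PowerSeries.X) ^ (2 * r))) :
    γ ≤ 0 :=
  gamma_odd_nonpos_of_shifted_reciprocal_general d r hodd A hA hpos γ hγ
end

section
/- Let b_0, ..., b_d be nonnegative reals that are nonincreasing for 1 <= k <= r-1 (b_k >= b_{k+1}), and suppose 1 <= r <= d/3 and r >= 2. Then (-1)^r * (r*gamma_r - (-1)^r d binom(d-r-1, r-1) b_0) <= 0, i.e. sgn(r*gamma_r - (-1)^r d binom(d-r-1, r-1) b_0) = (-1)^{r+1}, where gamma_r is defined by r*gamma_r = [u^{r-1}] ((1+u)B'(u) - dB(u))/(1+u)^{d-2r+1} for B(u) = sum b_k u^k. -/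
open PowerSeries Finset

/-!
Expanding `((1 + u)^(n+1))⁻¹ = ∑ (-1)^j C(n+j, n) u^j` with `n = d - 2r` and collecting terms by
`b_k`, the quantity `(-1)^r r γ_r - d C(d-r-1, r-1) b₀` equals `-(F + G)`, where
`F = ∑ (-1)^i (i+1) C(n+r-1-i, n) b_{i+1}` and `G = ∑ (-1)^i (d-i-1) C(n+r-2-i, n) b_{i+1}`.
In both sums the weights of the `b_{i+1}` are nonnegative and nonincreasing in `i` (for `F` this is
where `r ≤ n`, i.e. `3r ≤ d`, is needed), so each is an alternating sum of a nonincreasing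
nonnegative sequence, hence nonnegative.
-/

theorem PowerSeries.coeff_inv_one_add_X_pow {k : Type*} [Field k] (n j : ℕ) :
    coeff j (((1 + X : k⟦X⟧) ^ (n + 1))⁻¹) = (-1) ^ j * (n + j).choose n := by
  have h := congrArg (rescale (-1 : k)) (mk_add_choose_mul_one_sub_pow_eq_one k n)
  rw [map_mul, map_pow, map_sub, map_one, rescale_neg_one_X, sub_neg_eq_add] at h
  rw [← (eq_inv_iff_mul_eq_one (by simp)).2 h, coeff_rescale, coeff_mk]

theorem PowerSeries.neg_one_pow_mul_coeff_mul_inv_one_add_X_pow {k : Type*} [Field k]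
    (f : k⟦X⟧) (n s : ℕ) :
    (-1) ^ s * coeff s (f * ((1 + X) ^ (n + 1))⁻¹) =
      ∑ i ∈ range (s + 1), (-1) ^ i * (n + (s - i)).choose n * coeff i f := by
  rw [coeff_mul, Nat.sum_antidiagonal_eq_sum_range_succ (fun i j => coeff i f * coeff j _),
    mul_sum]
  refine sum_congr rfl fun i hi => ?_
  obtain ⟨t, rfl⟩ := Nat.exists_eq_add_of_le (Nat.le_of_lt_succ (mem_range.1 hi))
  have hsq : ((-1 : k) ^ t) * (-1) ^ t = 1 := by rw [← mul_pow]; norm_num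
  rw [coeff_inv_one_add_X_pow, Nat.add_sub_cancel_left, pow_add]
  linear_combination (-1) ^ i * ((n + t).choose n : k) * coeff i f * hsq

namespace Polynomial

theorem coeff_one_add_X_mul_derivative_sub_natCast_mul {R : Type*} [CommRing R]
    (B : R[X]) (d k : ℕ) :
    ((1 + X) * derivative B - (d : R[X]) * B).coeff k =
      (k + 1) * B.coeff (k + 1) - (d - k) * B.coeff k := by
  have hX : (X * derivative B).coeff k = k * B.coeff k := by
    cases k with
    | zero => simp
    | succ j => rw [coeff_X_mul, coeff_derivative]; push_cast; ring
  rw [coeff_sub, add_mul, one_mul, coeff_add, hX, coeff_derivative, ← C_eq_natCast, coeff_C_mul]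
  ring

theorem coeff_sum_range_C_mul_X_pow {R : Type*} [Semiring R] (b : ℕ → R) {d i : ℕ}
    (hi : i ≤ d) : (∑ k ∈ range (d + 1), C (b k) * X ^ k).coeff i = b i := by
  simp [Nat.lt_succ_iff.2 hi]

end Polynomial

theorem neg_one_pow_mul_coeff_eq_alternating_sums {k : Type*} [Field k] (B : Polynomial k)
    (b : ℕ → k) (d n s : ℕ) (hB : ∀ i ≤ s + 1, B.coeff i = b i) :
    (-1) ^ s * coeff s ((((1 + Polynomial.X) * Polynomial.derivative B - (d : Polynomial k) * B :
        Polynomial k) : k⟦X⟧) * ((1 + X) ^ (n + 1))⁻¹) =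
      ∑ i ∈ range (s + 1), (-1) ^ i * ((i + 1) * (n + (s - i)).choose n * b (i + 1)) +
        ∑ i ∈ range s, (-1) ^ i * ((d - (i + 1)) * (n + (s - (i + 1))).choose n * b (i + 1)) -
        d * (n + s).choose n * b 0 := by
  rw [neg_one_pow_mul_coeff_mul_inv_one_add_X_pow]
  calc
    _ = ∑ i ∈ range (s + 1), ((-1) ^ i * ((i + 1) * (n + (s - i)).choose n * b (i + 1)) -
        (-1) ^ i * ((d - i) * (n + (s - i)).choose n * b i)) := by
      refine sum_congr rfl fun i hi => ?_
      rw [mem_range] at hi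
      rw [Polynomial.coeff_coe, Polynomial.coeff_one_add_X_mul_derivative_sub_natCast_mul,
        hB i (by omega), hB (i + 1) (by omega)]
      ring
    _ = _ := by
      rw [sum_sub_distrib, sum_range_succ' (fun i => (-1) ^ i * ((d - i) * _ * b i))]
      simp only [pow_succ (-1 : k), mul_neg_one, neg_mul, sum_neg_distrib, Nat.cast_add,
        Nat.cast_one, pow_zero, Nat.cast_zero, sub_zero, tsub_zero, one_mul]
      ring

theorem Nat.add_two_mul_choose_le (n j i : ℕ) (h : j + 1 ≤ (i + 1) * n) :
    (i + 2) * (n + j).choose n ≤ (i + 1) * (n + (j + 1)).choose n := by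
  have key := Nat.choose_mul_succ_eq (n + j) n
  rw [show n + j + 1 - n = j + 1 by omega] at key
  refine Nat.le_of_mul_le_mul_right ?_ (Nat.succ_pos j)
  calc (i + 2) * (n + j).choose n * (j + 1)
      ≤ (i + 1) * ((n + j).choose n * (n + j + 1)) := by nlinarith
    _ = (i + 1) * (n + (j + 1)).choose n * (j + 1) := by rw [key, ← add_assoc]; ring

section Alternating

variable {R : Type*} [CommRing R] [LinearOrder R] [IsStrictOrderedRing R]

theorem sum_range_neg_one_pow_mul_nonneg {f : ℕ → R} {N : ℕ}
    (hf : ∀ i, i + 1 < N → f (i + 1) ≤ f i) (hf0 : ∀ i < N, 0 ≤ f i) :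
    0 ≤ ∑ i ∈ range N, (-1) ^ i * f i := by
  induction N using Nat.twoStepInduction generalizing f with
  | zero => simp
  | one => simpa using hf0 0 one_pos
  | more N ih _ =>
    rw [sum_range_succ', sum_range_succ']
    have hpair : 0 ≤ f 0 - f 1 := sub_nonneg.2 (hf 0 (by omega))
    have htail := ih (f := fun i => f (i + 1 + 1)) (fun i hi => hf (i + 2) (by omega))
      (fun i hi => hf0 (i + 2) (by omega))
    convert add_nonneg htail hpair using 1
    simp only [pow_succ, pow_zero, zero_add, mul_neg_one, neg_neg, neg_mul, one_mul]
    ring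

theorem sum_range_neg_one_pow_mul_mul_nonneg {f g : ℕ → R} {N : ℕ}
    (hf : ∀ i, i + 1 < N → f (i + 1) ≤ f i) (hf0 : ∀ i < N, 0 ≤ f i)
    (hg : ∀ i, i + 1 < N → g (i + 1) ≤ g i) (hg0 : ∀ i < N, 0 ≤ g i) :
    0 ≤ ∑ i ∈ range N, (-1) ^ i * (f i * g i) :=
  sum_range_neg_one_pow_mul_nonneg
    (fun i hi => mul_le_mul (hf i hi) (hg i hi) (hg0 _ hi) (hf0 i (by omega)))
    (fun i hi => mul_nonneg (hf0 i hi) (hg0 i hi))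

theorem sum_range_neg_one_pow_mul_succ_mul_choose_mul_nonneg {n s : ℕ} (hsn : s ≤ n)
    {g : ℕ → R} (hg : ∀ i, i + 1 < s + 1 → g (i + 1) ≤ g i) (hg0 : ∀ i < s + 1, 0 ≤ g i) :
    0 ≤ ∑ i ∈ range (s + 1), (-1) ^ i * ((i + 1) * (n + (s - i)).choose n * g i) := by
  refine sum_range_neg_one_pow_mul_mul_nonneg (fun i hi => ?_) (fun i _ => by positivity) hg hg0
  have h := Nat.add_two_mul_choose_le n (s - (i + 1)) i
    ((show s - (i + 1) + 1 ≤ n by omega).trans (Nat.le_mul_of_pos_left n i.succ_pos))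
  rw [show s - (i + 1) + 1 = s - i by omega] at h
  have hR := (Nat.cast_le (α := R)).2 h
  push_cast at hR ⊢
  linarith

theorem sum_range_neg_one_pow_mul_sub_mul_choose_mul_nonneg {d n s : ℕ} (hsd : s ≤ d)
    {g : ℕ → R} (hg : ∀ i, i + 1 < s → g (i + 1) ≤ g i) (hg0 : ∀ i < s, 0 ≤ g i) :
    0 ≤ ∑ i ∈ range s, (-1) ^ i * ((d - (i + 1)) * (n + (s - (i + 1))).choose n * g i) := by
  have hd : ∀ i < s, (0 : R) ≤ d - (i + 1) := fun i hi => by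
    rw [sub_nonneg]; exact_mod_cast (by omega : i + 1 ≤ d)
  refine sum_range_neg_one_pow_mul_mul_nonneg (fun i hi => ?_)
    (fun i hi => mul_nonneg (hd i hi) (by positivity)) hg hg0
  have hchoose : ((n + (s - (i + 1 + 1))).choose n : R) ≤ (n + (s - (i + 1))).choose n := by
    gcongr; omega
  push_cast
  exact mul_le_mul (by linarith) hchoose (by positivity) (hd i (by omega))

end Alternating

/-- If `b₀, …, b_d` are nonnegative and nonincreasing for `1 ≤ k ≤ r-1`, with `2 ≤ r ≤ d/3`,
then `(-1)^r (r·γᵣ - (-1)^r d binom(d-r-1, r-1) b₀) ≤ 0`, where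
`r·γᵣ = [u^{r-1}] ((1+u)B'(u) - dB(u))/(1+u)^{d-2r+1}` for `B(u) = ∑ bₖ uᵏ`. -/
theorem gamma_shifted_sign_of_decreasing_coeffs
    (d r : ℕ) (hr2 : 2 ≤ r) (hrd : 3 * r ≤ d) (b : ℕ → ℝ)
    (hnonneg : ∀ k ≤ d, 0 ≤ b k)
    (hdec : ∀ k, 1 ≤ k → k ≤ r - 1 → b (k + 1) ≤ b k) :
    (-1) ^ r *
        (PowerSeries.coeff (R := ℝ) (r - 1)
            ((((1 + Polynomial.X) * Polynomial.derivative
                  (∑ k ∈ Finset.range (d + 1), Polynomial.C (b k) * Polynomial.X ^ k) -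
                (d : Polynomial ℝ) *
                  (∑ k ∈ Finset.range (d + 1), Polynomial.C (b k) * Polynomial.X ^ k) :
                Polynomial ℝ) : PowerSeries ℝ) *
              (((1 + PowerSeries.X) ^ (d - 2 * r + 1))⁻¹ : PowerSeries ℝ)) -
          (-1) ^ r * (d : ℝ) * (Nat.choose (d - r - 1) (r - 1) : ℝ) * b 0) ≤ 0 := by
  obtain ⟨s, rfl⟩ : ∃ s, r = s + 1 := ⟨r - 1, by omega⟩
  set n := d - 2 * (s + 1)
  have hexpand := neg_one_pow_mul_coeff_eq_alternating_sums _ b d n s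
    fun i hi => Polynomial.coeff_sum_range_C_mul_X_pow (d := d) b (by omega)
  have hF := sum_range_neg_one_pow_mul_succ_mul_choose_mul_nonneg (g := fun i => b (i + 1))
    (show s ≤ n by omega) (fun i hi => hdec (i + 1) (by omega) (by omega))
    (fun i hi => hnonneg _ (by omega))
  have hG := sum_range_neg_one_pow_mul_sub_mul_choose_mul_nonneg (g := fun i => b (i + 1))
    (n := n) (show s ≤ d by omega) (fun i hi => hdec (i + 1) (by omega) (by omega))
    (fun i hi => hnonneg _ (by omega))
  have hw0 : (n + s).choose n = (d - (s + 1) - 1).choose s := by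
    rw [show d - (s + 1) - 1 = n + s by omega, Nat.choose_symm_add]
  have hsq : ((-1 : ℝ) ^ (s + 1)) * (-1) ^ (s + 1) = 1 := by rw [← mul_pow]; norm_num
  rw [Nat.add_sub_cancel, ← hw0]
  linear_combination (-1) * hexpand + hF + hG - d * (n + s).choose n * b 0 * hsq
end
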